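/- Let 𝔸 be a unital real Banach algebra, f ∈ 𝔸 with f² = −r²·1 for some real r > 0, and let E_1,…,E_d ∈ 𝔸 be invertible elements such that for each i there is ε_i ∈ {1,−1} with E_i⁻¹ f E_i = ε_i f. Then for every multi-index l ∈ {0,1}^d the iterated decomposition of exp(−f) takes exactly one of four shapes: exp(−f)_{c^l(→E)} = exp(−f) if l = (0,…,0) and ε_i = 1 for all i; = cos(r)·1 if l = (0,…,0) and ε_i = −1 for some i; = −(sin(r)/r)·f if l ≠ (0,…,0) and ε_i = (−1)^{l_i} for all i; and = 0 if l ≠ (0,…,0) and ε_i ≠ (−1)^{l_i} for some i. -/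

import Mathlib

/-! Since `f² = −r²`, the even and odd parts of the exponential series give
`exp(−f) = cos r · 1 − (sin r / r) f`. Each `A ↦ A_{c^s(E)}` is `ℝ`-linear, and an element that
conjugation by `E` scales by `c` is scaled by `½(1 + (−1)^s c)`. For `1` (where `c = 1`) and for
`f` (where `c = εᵢ = ±1`) this factor is `1` or `0`, so iterating over `E₁,…,E_d` keeps or
kills each of the two terms independently, which yields the four shapes. -/

noncomputable section

variable {𝔸 : Type*}

/-- The commutative (`s = 0`) and anticommutative (`s = 1`) part of `A` with respect to an
invertible element `E`: `A_{c^s(E)} = ½(A + (−1)^s E⁻¹AE)`. -/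
def cPart [Ring 𝔸] [Algebra ℝ 𝔸] (E : 𝔸) (s : Fin 2) (A : 𝔸) : 𝔸 :=
  (2 : ℝ)⁻¹ • (A + (-1 : 𝔸) ^ (s : ℕ) * (Ring.inverse E * A * E))

/-- The forward iterated decomposition `A_{c^l(→E)}`, applying the first list entry first. -/
def cFwd [Ring 𝔸] [Algebra ℝ 𝔸] (L : List (𝔸 × Fin 2)) (A : 𝔸) : 𝔸 :=
  L.foldl (fun acc p => cPart p.1 p.2 acc) A

open scoped Nat

theorem pow_two_mul_of_sq_eq_neg_sq_smul_one [Ring 𝔸] [Algebra ℝ 𝔸] {f : 𝔸} {r : ℝ}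
    (hf : f ^ 2 = -(r ^ 2) • (1 : 𝔸)) (n : ℕ) :
    f ^ (2 * n) = ((-1) ^ n * r ^ (2 * n)) • (1 : 𝔸) := by
  rw [pow_mul, hf, smul_pow, one_pow, neg_pow, pow_mul]

theorem exp_eq_cos_smul_one_add_sin_div_smul [NormedRing 𝔸] [NormedAlgebra ℝ 𝔸] [CompleteSpace 𝔸]
    {f : 𝔸} {r : ℝ} (hr : r ≠ 0) (hf : f ^ 2 = -(r ^ 2) • (1 : 𝔸)) :
    NormedSpace.exp f = Real.cos r • (1 : 𝔸) + (Real.sin r / r) • f := by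
  have hpow := pow_two_mul_of_sq_eq_neg_sq_smul_one hf
  have hcos : HasSum (fun n ↦ ((2 * n)! : ℝ)⁻¹ • f ^ (2 * n)) (Real.cos r • (1 : 𝔸)) := by
    convert (Real.hasSum_cos r).smul_const (1 : 𝔸) using 2 with n
    rw [hpow, smul_smul, div_eq_inv_mul]
  have hsin : HasSum (fun n ↦ ((2 * n + 1)! : ℝ)⁻¹ • f ^ (2 * n + 1)) ((Real.sin r / r) • f) := by
    convert ((Real.hasSum_sin r).div_const r).smul_const f using 2 with n
    rw [pow_succ, hpow, smul_mul_assoc, one_mul, smul_smul]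
    congr 1
    field_simp
    ring
  exact (NormedSpace.exp_series_hasSum_exp' (𝕂 := ℝ) f).unique (hcos.even_add_odd hsin)

section Decomposition

variable [Ring 𝔸] [Algebra ℝ 𝔸]

theorem cPart_add (E : 𝔸) (s : Fin 2) (A B : 𝔸) :
    cPart E s (A + B) = cPart E s A + cPart E s B := by
  simp only [cPart, mul_add, add_mul]
  module

theorem cPart_smul (E : 𝔸) (s : Fin 2) (c : ℝ) (A : 𝔸) :
    cPart E s (c • A) = c • cPart E s A := by
  simp only [cPart, mul_smul_comm, smul_mul_assoc]
  module

theorem cPart_of_conj_eq_smul {E A : 𝔸} {c : ℝ} (h : Ring.inverse E * A * E = c • A)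
    (s : Fin 2) : cPart E s A = ((1 + (-1) ^ (s : ℕ) * c) / 2) • A := by
  fin_cases s
  · simp only [cPart, h, pow_zero, one_mul]
    module
  · simp only [cPart, h, pow_one, neg_one_mul]
    module

theorem cFwd_cons (p : 𝔸 × Fin 2) (L : List (𝔸 × Fin 2)) (A : 𝔸) :
    cFwd (p :: L) A = cFwd L (cPart p.1 p.2 A) := rfl

theorem cFwd_add (L : List (𝔸 × Fin 2)) (A B : 𝔸) : cFwd L (A + B) = cFwd L A + cFwd L B := by
  induction L generalizing A B with
  | nil => rfl
  | cons p L ih => simp only [cFwd_cons, cPart_add, ih]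

theorem cFwd_smul (L : List (𝔸 × Fin 2)) (c : ℝ) (A : 𝔸) : cFwd L (c • A) = c • cFwd L A := by
  induction L generalizing A with
  | nil => rfl
  | cons p L ih => simp only [cFwd_cons, cPart_smul, ih]

theorem cFwd_ofFn_of_conj_eq_smul {d : ℕ} (E : Fin d → 𝔸) (l : Fin d → Fin 2) {A : 𝔸}
    {c : Fin d → ℝ} (h : ∀ i, Ring.inverse (E i) * A * E i = c i • A) :
    cFwd (List.ofFn fun i ↦ (E i, l i)) A = (∏ i, (1 + (-1) ^ (l i : ℕ) * c i) / 2) • A := by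
  induction d with
  | zero => simp [cFwd]
  | succ d ih =>
    rw [List.ofFn_succ, cFwd_cons, cPart_of_conj_eq_smul (h 0), cFwd_smul,
      ih (fun i ↦ E i.succ) (fun i ↦ l i.succ) (fun i ↦ h i.succ), smul_smul,
      Fin.prod_univ_succ]

theorem one_add_mul_div_two_eq_ite {σ ε : ℝ} (hσ : σ = 1 ∨ σ = -1) (hε : ε = 1 ∨ ε = -1) :
    (1 + σ * ε) / 2 = if ε = σ then 1 else 0 := by
  rcases hσ with rfl | rfl <;> rcases hε with rfl | rfl <;> norm_num

theorem cFwd_ofFn_one {d : ℕ} (E : Fin d → 𝔸) (hE : ∀ i, IsUnit (E i)) (l : Fin d → Fin 2) :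
    cFwd (List.ofFn fun i ↦ (E i, l i)) (1 : 𝔸) = if l = 0 then 1 else 0 := by
  have hconj i : Ring.inverse (E i) * 1 * E i = (1 : ℝ) • (1 : 𝔸) := by
    rw [mul_one, Ring.inverse_mul_cancel _ (hE i), one_smul]
  have hfactor (s : Fin 2) : (1 + (-1 : ℝ) ^ (s : ℕ) * 1) / 2 = if s = 0 then 1 else 0 := by
    fin_cases s <;> norm_num
  rw [cFwd_ofFn_of_conj_eq_smul E l hconj, Finset.prod_congr rfl fun i _ ↦ hfactor (l i),
    Fintype.prod_boole]
  simp [funext_iff]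

theorem cFwd_ofFn_of_conj_eq_sign_smul {d : ℕ} (E : Fin d → 𝔸) (l : Fin d → Fin 2) {A : 𝔸}
    {ε : Fin d → ℝ} (hε : ∀ i, ε i = 1 ∨ ε i = -1)
    (h : ∀ i, Ring.inverse (E i) * A * E i = ε i • A) :
    cFwd (List.ofFn fun i ↦ (E i, l i)) A = if ∀ i, ε i = (-1) ^ (l i : ℕ) then A else 0 := by
  rw [cFwd_ofFn_of_conj_eq_smul E l h, Finset.prod_congr rfl fun i _ ↦
    one_add_mul_div_two_eq_ite (neg_one_pow_eq_or ℝ _) (hε i), Fintype.prod_boole]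
  simp only [ite_smul, one_smul, zero_smul]

end Decomposition

/-- The iterated decomposition of `exp(−f)` with respect to invertible elements `E₁,…,E_d`,
each of which commutes (`ε i = 1`) or anticommutes (`ε i = −1`) with `f`, takes exactly one of
four shapes: `exp(−f)`, `cos(r)·1`, `−(sin(r)/r)·f`, or `0`. -/
theorem cFwd_exp_four_shapes [NormedRing 𝔸] [NormedAlgebra ℝ 𝔸] [CompleteSpace 𝔸]
    (f : 𝔸) (r : ℝ) (hr : 0 < r) (hf : f ^ 2 = -(r ^ 2) • (1 : 𝔸))
    {d : ℕ} (E : Fin d → 𝔸) (hE : ∀ i, IsUnit (E i))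
    (ε : Fin d → ℝ) (hε : ∀ i, ε i = 1 ∨ ε i = -1)
    (hcom : ∀ i, Ring.inverse (E i) * f * E i = ε i • f)
    (l : Fin d → Fin 2) :
    ((l = 0 ∧ ∀ i, ε i = 1) →
      cFwd (List.ofFn (fun i => (E i, l i))) (NormedSpace.exp (-f)) =
        NormedSpace.exp (-f)) ∧
    ((l = 0 ∧ ∃ i, ε i = -1) →
      cFwd (List.ofFn (fun i => (E i, l i))) (NormedSpace.exp (-f)) =
        Real.cos r • (1 : 𝔸)) ∧
    ((l ≠ 0 ∧ ∀ i, ε i = (-1 : ℝ) ^ ((l i : ℕ))) →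
      cFwd (List.ofFn (fun i => (E i, l i))) (NormedSpace.exp (-f)) =
        -((Real.sin r / r) • f)) ∧
    ((l ≠ 0 ∧ ∃ i, ε i ≠ (-1 : ℝ) ^ ((l i : ℕ))) →
      cFwd (List.ofFn (fun i => (E i, l i))) (NormedSpace.exp (-f)) = 0) := by
  have hexp : NormedSpace.exp (-f) = Real.cos r • (1 : 𝔸) + (-(Real.sin r / r)) • f := by
    rw [exp_eq_cos_smul_one_add_sin_div_smul hr.ne' (by rwa [neg_sq]), smul_neg, ← neg_smul]
  have hdecomp : cFwd (List.ofFn fun i ↦ (E i, l i)) (NormedSpace.exp (-f)) =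
      Real.cos r • (if l = 0 then 1 else 0) +
        (-(Real.sin r / r)) • (if ∀ i, ε i = (-1) ^ (l i : ℕ) then f else 0) := by
    rw [hexp, cFwd_add, cFwd_smul, cFwd_smul, cFwd_ofFn_one E hE,
      cFwd_ofFn_of_conj_eq_sign_smul E l hε hcom]
  rw [hdecomp]
  refine ⟨?_, ?_, ?_, ?_⟩
  · rintro ⟨rfl, hε1⟩
    simp [hε1, hexp]
  · rintro ⟨rfl, i, hi⟩
    have hnot : ¬∀ j, ε j = 1 := fun h ↦ by norm_num [h i] at hi
    simp [hnot]
  · rintro ⟨hl, hεl⟩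
    simp [hl, hεl]
  · rintro ⟨hl, i, hi⟩
    have hnot : ¬∀ j, ε j = (-1) ^ (l j : ℕ) := fun h ↦ hi (h i)
    simp [hl, hnot]
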